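/- arXiv:0912.0960 — 3 statements merged into one kernel-verified Lean document; each statement's English description precedes it below -/
import Mathlib

section
/- Let T : X → Y be a linear map between cone normed spaces over the same ordered Banach space (E, P), where P is normal with normal constant M > 0. If T is sequentially continuous, i.e. for every sequence (x_n) in X converging to a point x₀ ∈ X the sequence (Tx_n) converges to Tx₀, then T is continuous at zero: for every c ∈ E with 0 ≪ c there exists t ∈ E with 0 ≪ t such that ‖Tx‖_p ≪ c whenever ‖x‖_p ≪ t. -/
open Set

section ConeDefs

variable {E : Type*} [NormedAddCommGroup E] [NormedSpace ℝ E]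

/-- `a ≤ b` with respect to the cone `P`: `b - a ∈ P`. -/
def coneLE (P : Set E) (a b : E) : Prop := b - a ∈ P

/-- `a ≪ b` with respect to the cone `P`: `b - a ∈ interior P`. -/
def coneLT (P : Set E) (a b : E) : Prop := b - a ∈ interior P

/-- `P` is a cone in the real Banach space `E`. -/
def IsCone (P : Set E) : Prop :=
  IsClosed P ∧ P.Nonempty ∧ P ≠ {0} ∧
    (∀ x ∈ P, ∀ y ∈ P, ∀ a b : ℝ, 0 ≤ a → 0 ≤ b → a • x + b • y ∈ P) ∧
    P ∩ (-P) = {0}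

/-- `P` is a normal cone with normal constant `M`. -/
def IsNormalConst (P : Set E) (M : ℝ) : Prop :=
  0 < M ∧ ∀ a b : E, coneLE P 0 a → coneLE P a b → ‖a‖ ≤ M * ‖b‖

/-- `n : X → E` is a cone norm on `X` with respect to the cone `P ⊆ E`. -/
def IsConeNorm {X : Type*} [AddCommGroup X] [Module ℝ X] (P : Set E) (n : X → E) : Prop :=
  (∀ x, coneLE P 0 (n x)) ∧ (∀ x, n x = 0 ↔ x = 0) ∧
    (∀ (α : ℝ) (x : X), n (α • x) = |α| • n x) ∧
    (∀ x y, coneLE P (n (x + y)) (n x + n y))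

/-- Convergence of a sequence in a cone normed space. -/
def ConeConv {X : Type*} [AddCommGroup X] [Module ℝ X] (P : Set E) (n : X → E)
    (x : ℕ → X) (x₀ : X) : Prop :=
  ∀ c : E, coneLT P 0 c → ∃ N : ℕ, ∀ k ≥ N, coneLT P (n (x k - x₀)) c

/-- A sequence in a cone normed space is Cauchy. -/
def ConeCauchy {X : Type*} [AddCommGroup X] [Module ℝ X] (P : Set E) (n : X → E)
    (x : ℕ → X) : Prop :=
  ∀ c : E, coneLT P 0 c → ∃ N : ℕ, ∀ k ≥ N, ∀ m ≥ N, coneLT P (n (x k - x m)) c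

/-- A cone normed space is a cone Banach space if every Cauchy sequence converges. -/
def ConeComplete {X : Type*} [AddCommGroup X] [Module ℝ X] (P : Set E) (n : X → E) : Prop :=
  ∀ x : ℕ → X, ConeCauchy P n x → ∃ x₀ : X, ConeConv P n x x₀

/-- The ball `B_c(x) = {y : ‖x - y‖_p ≪ c}`. -/
def coneBall {X : Type*} [AddCommGroup X] [Module ℝ X] (P : Set E) (n : X → E)
    (x : X) (c : E) : Set X :=
  {y | coneLT P (n (x - y)) c}

/-- The cone topology: generated by the sub-basis of all balls `B_c(x)`, `0 ≪ c`. -/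
def coneTopology {X : Type*} [AddCommGroup X] [Module ℝ X] (P : Set E) (n : X → E) :
    TopologicalSpace X :=
  TopologicalSpace.generateFrom {s | ∃ x c, coneLT P 0 c ∧ s = coneBall P n x c}

/-- A subset `A ⊆ E` is upper bounded with respect to the cone `P`. -/
def ConeUpperBounded (P : Set E) (A : Set E) : Prop :=
  ∃ t : E, coneLE P 0 t ∧ ∀ a ∈ A, coneLE P a t

/-- `P` has the supremum property: every upper bounded subset of `P`
has a least upper bound in `P` (least among the nonnegative upper bounds). -/
def SupremumProperty (P : Set E) : Prop :=
  ∀ A ⊆ P, ConeUpperBounded P A →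
    ∃ s ∈ P, (∀ a ∈ A, coneLE P a s) ∧
      ∀ t : E, coneLE P 0 t → (∀ a ∈ A, coneLE P a t) → coneLE P s t

end ConeDefs

section Aux
variable {E : Type*} [NormedAddCommGroup E] [NormedSpace ℝ E]

lemma cone_add_mem {P : Set E} (hP : IsCone P) {x y : E} (hx : x ∈ P) (hy : y ∈ P) :
    x + y ∈ P := by
  have := hP.2.2.2.1 x hx y hy 1 1 zero_le_one zero_le_one
  simpa using this

lemma interior_add_mem {P : Set E} (hP : IsCone P) {u v : E}
    (hu : u ∈ interior P) (hv : v ∈ P) : u + v ∈ interior P := by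
  rw [mem_interior]
  refine ⟨(· + v) '' interior P, ?_, ?_, ⟨u, hu, rfl⟩⟩
  · rintro _ ⟨w, hw, rfl⟩
    exact cone_add_mem hP (interior_subset hw) hv
  · exact (Homeomorph.addRight v).isOpenMap _ isOpen_interior

lemma interior_smul_mem {P : Set E} (hP : IsCone P) {a : ℝ} (ha : 0 < a) {x : E}
    (hx : x ∈ interior P) : a • x ∈ interior P := by
  rw [mem_interior]
  refine ⟨(a • ·) '' interior P, ?_, ?_, ⟨x, hx, rfl⟩⟩
  · rintro _ ⟨w, hw, rfl⟩
    have := hP.2.2.2.1 w (interior_subset hw) w (interior_subset hw) a 0 ha.le le_rfl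
    simpa using this
  · exact (isOpenMap_smul₀ (ne_of_gt ha)) _ isOpen_interior

end Aux



/-- sequential continuity implies continuity at zero
(for a normal cone with normal constant `M > 0`). -/
theorem sequential_continuity_implies_continuity_at_zero
    {E : Type*} [NormedAddCommGroup E] [NormedSpace ℝ E] [CompleteSpace E]
    {X Y : Type*} [AddCommGroup X] [Module ℝ X] [AddCommGroup Y] [Module ℝ Y]
    (P : Set E) (hP : IsCone P) (hint : (interior P).Nonempty)
    (M : ℝ) (hM : IsNormalConst P M)
    (nX : X → E) (nY : Y → E) (hnX : IsConeNorm P nX) (hnY : IsConeNorm P nY)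
    (T : X →ₗ[ℝ] Y)
    (hseq : ∀ (x : ℕ → X) (x₀ : X), ConeConv P nX x x₀ →
      ConeConv P nY (fun k => T (x k)) (T x₀)) :
    ∀ c : E, coneLT P 0 c → ∃ t : E, coneLT P 0 t ∧
      ∀ x : X, coneLT P (nX x) t → coneLT P (nY (T x)) c := by
  intro c hc
  by_contra hcon
  push_neg at hcon
  obtain ⟨e, he⟩ := hint
  have hfind : ∀ k : ℕ, ∃ x : X,
      coneLT P (nX x) ((1 / ((k : ℝ) + 1)) • e) ∧ ¬ coneLT P (nY (T x)) c := by
    intro k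
    have hpos : coneLT P 0 ((1 / ((k : ℝ) + 1)) • e) := by
      have : (0:ℝ) < 1 / ((k : ℝ) + 1) := by positivity
      simpa [coneLT] using interior_smul_mem hP this he
    obtain ⟨x, hx1, hx2⟩ := hcon _ hpos
    exact ⟨x, hx1, hx2⟩
  choose x hx1 hx2 using hfind
  have hconv : ConeConv P nX x 0 := by
    intro c' hc'
    rw [coneLT, sub_zero] at hc'
    obtain ⟨ε, hε, hball⟩ := Metric.isOpen_iff.mp isOpen_interior c' hc'
    obtain ⟨N, hN⟩ := exists_nat_gt (‖e‖ / ε)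
    refine ⟨N, fun k hk => ?_⟩
    have hnorm : ‖(1 / ((k : ℝ) + 1)) • e‖ < ε := by
      rw [norm_smul]
      have h1 : ‖e‖ / ε < (k : ℝ) + 1 := by
        calc ‖e‖ / ε < (N : ℝ) := hN
        _ ≤ (k : ℝ) := by exact_mod_cast hk
        _ ≤ (k : ℝ) + 1 := by linarith
      have h2 : ‖e‖ < ε * ((k : ℝ) + 1) := by
        rw [div_lt_iff₀ hε] at h1; linarith [h1]
      have hk1 : (0:ℝ) < (k : ℝ) + 1 := by positivity
      rw [Real.norm_eq_abs, abs_of_pos (by positivity : (0:ℝ) < 1 / ((k : ℝ) + 1))]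
      rw [div_mul_eq_mul_div, one_mul, div_lt_iff₀ (by positivity)]
      linarith
    have hmem : c' - (1 / ((k : ℝ) + 1)) • e ∈ interior P := by
      apply hball
      rw [Metric.mem_ball, dist_eq_norm, sub_sub_cancel_left, norm_neg]
      exact hnorm
    have hkP : (1 / ((k : ℝ) + 1)) • e - nX (x k) ∈ P := interior_subset (hx1 k)
    have : c' - nX (x k) ∈ interior P := by
      have := interior_add_mem hP hmem hkP
      simpa [sub_add_sub_cancel] using this
    simpa [coneLT, sub_zero] using this
  obtain ⟨N, hNc⟩ := hseq x 0 hconv c hc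
  have := hNc N le_rfl
  simp only [map_zero, sub_zero] at this
  exact hx2 N this
end

section
/- Let (X, ‖·‖_p) be a cone normed space over (E, P), let x ∈ X and c ∈ E with 0 ≪ c. Then the closure of the ball B_{c/2}(x) with respect to the cone topology is contained in the ball B_c(x). -/
open Set

section Aux

variable {E : Type*} [NormedAddCommGroup E] [NormedSpace ℝ E]

lemma aux_zero_mem {P : Set E} (hP : IsCone P) : (0 : E) ∈ P := by
  have h := hP.2.2.2.2
  have : (0 : E) ∈ P ∩ (-P) := by rw [h]; rfl
  exact this.1

lemma aux_add_mem {P : Set E} (hP : IsCone P) {a b : E} (ha : a ∈ P) (hb : b ∈ P) :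
    a + b ∈ P := by
  have := hP.2.2.2.1 a ha b hb 1 1 zero_le_one zero_le_one
  simpa using this

lemma aux_int_add_P {P : Set E} (hP : IsCone P) {u p : E} (hu : u ∈ interior P)
    (hp : p ∈ P) : u + p ∈ interior P := by
  refine mem_interior.2 ⟨(· + p) '' interior P, ?_, ?_, ⟨u, hu, rfl⟩⟩
  · rintro w ⟨v, hv, rfl⟩
    exact aux_add_mem hP (interior_subset hv) hp
  · exact (isOpenMap_add_right p) _ isOpen_interior

lemma aux_half_int {P : Set E} (hP : IsCone P) {u : E} (hu : u ∈ interior P) :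
    (1 / 2 : ℝ) • u ∈ interior P := by
  refine mem_interior.2 ⟨((1 / 2 : ℝ) • ·) '' interior P, ?_, ?_, ⟨u, hu, rfl⟩⟩
  · rintro w ⟨v, hv, rfl⟩
    have := hP.2.2.2.1 v (interior_subset hv) 0 (aux_zero_mem hP) (1/2) 0
      (by norm_num) le_rfl
    simpa using this
  · exact (isOpenMap_smul₀ (by norm_num : (1/2 : ℝ) ≠ 0)) _ isOpen_interior

end Aux

/-- the closure (cone topology) of `B_{c/2}(x)` is contained in `B_c(x)`. -/
theorem closure_coneBall_half_subset
    {E : Type*} [NormedAddCommGroup E] [NormedSpace ℝ E] [CompleteSpace E]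
    {X : Type*} [AddCommGroup X] [Module ℝ X]
    (P : Set E) (hP : IsCone P) (hint : (interior P).Nonempty)
    (M : ℝ) (hM : IsNormalConst P M)
    (nX : X → E) (hnX : IsConeNorm P nX)
    (x : X) (c : E) (hc : coneLT P 0 c) :
    @closure X (coneTopology P nX) (coneBall P nX x ((1 / 2 : ℝ) • c)) ⊆
      coneBall P nX x c := by
  intro y hy
  letI T := coneTopology P nX
  have hcI : c ∈ interior P := by simpa [coneLT] using hc
  have h0c2 : coneLT P 0 ((1 / 2 : ℝ) • c) := by
    simpa [coneLT] using aux_half_int hP hcI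
  -- the ball around y of radius c/2 is open and contains y
  have hopen : @IsOpen X T (coneBall P nX y ((1 / 2 : ℝ) • c)) :=
    TopologicalSpace.GenerateOpen.basic _ ⟨y, (1 / 2 : ℝ) • c, h0c2, rfl⟩
  have hn0 : nX 0 = 0 := (hnX.2.1 0).2 rfl
  have hyball : y ∈ coneBall P nX y ((1 / 2 : ℝ) • c) := by
    show coneLT P (nX (y - y)) _
    simpa [coneLT, hn0] using h0c2
  obtain ⟨z, hz1, hz2⟩ := mem_closure_iff.1 hy _ hopen hyball
  have hxz : (1 / 2 : ℝ) • c - nX (x - z) ∈ interior P := hz2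
  have hyz : (1 / 2 : ℝ) • c - nX (y - z) ∈ interior P := hz1
  have hsym : nX (z - y) = nX (y - z) := by
    have := hnX.2.2.1 (-1) (y - z)
    simpa [neg_sub] using this
  have htri : nX (x - z) + nX (y - z) - nX (x - y) ∈ P := by
    have h := hnX.2.2.2 (x - z) (z - y)
    have hxy : (x - z) + (z - y) = x - y := by abel
    rw [hxy, hsym] at h
    exact h
  have hcc : (1 / 2 : ℝ) • c + (1 / 2 : ℝ) • c = c := by
    rw [← add_smul]; norm_num
  have key : c - nX (x - y) =
      ((1 / 2 : ℝ) • c - nX (x - z)) +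
        (((1 / 2 : ℝ) • c - nX (y - z)) + (nX (x - z) + nX (y - z) - nX (x - y))) := by
    module
  show c - nX (x - y) ∈ interior P
  rw [key]
  exact aux_int_add_P hP hxz (interior_subset (aux_int_add_P hP hyz htri))
end

section
/- (Baire category theorem for cone Banach spaces) Let (X, ‖·‖_p) be a cone Banach space over (E, P), where P is normal with normal constant M > 0. If (A_n)_{n∈ℕ} is a sequence of subsets of X, each of which is open and dense with respect to the cone topology, then the intersection ⋂_{n∈ℕ} A_n is dense in X with respect to the cone topology. -/
/-! Fix an interior point `e` of `P`. The gauge of the order interval `{x | ‖x‖ₚ ≤ e}` is a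
seminorm on `X` whose open `r`-balls are exactly the cone balls `B_{r e}(x)`. Since every `c ≫ 0`
dominates some `r e` with `r > 0`, these balls generate the cone topology, and the cone-Cauchy
sequences are the Cauchy sequences of the gauge. So the cone topology comes from a complete
pseudometric, and Baire's theorem for complete pseudometric spaces applies. -/

open Set

open Filter Topology Pointwise

section Cone

variable {E : Type*} [NormedAddCommGroup E] [NormedSpace ℝ E] {P : Set E}

namespace IsCone

theorem smul_add_smul_mem (hP : IsCone P) {x y : E} (hx : x ∈ P) (hy : y ∈ P) {a b : ℝ}
    (ha : 0 ≤ a) (hb : 0 ≤ b) : a • x + b • y ∈ P :=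
  hP.2.2.2.1 x hx y hy a b ha hb

theorem add_mem (hP : IsCone P) {x y : E} (hx : x ∈ P) (hy : y ∈ P) : x + y ∈ P := by
  simpa using hP.smul_add_smul_mem hx hy zero_le_one zero_le_one

theorem smul_mem (hP : IsCone P) {t : ℝ} (ht : 0 ≤ t) {x : E} (hx : x ∈ P) :
    t • x ∈ P := by
  simpa using hP.smul_add_smul_mem hx hx ht le_rfl

theorem add_mem_interior (hP : IsCone P) {u p : E} (hu : u ∈ interior P) (hp : p ∈ P) :
    u + p ∈ interior P := by
  refine interior_maximal (t := (· - p) ⁻¹' interior P) (fun w hw => ?_)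
    (isOpen_interior.preimage (continuous_id.sub continuous_const))
    (show u + p - p ∈ interior P by simpa using hu)
  simpa using hP.add_mem (interior_subset hw) hp

theorem smul_mem_interior (hP : IsCone P) {t : ℝ} (ht : 0 < t) {u : E} (hu : u ∈ interior P) :
    t • u ∈ interior P := by
  have hPt : t • P ⊆ P := by
    rintro _ ⟨x, hx, rfl⟩
    exact hP.smul_mem ht.le hx
  exact interior_mono hPt (by rw [interior_smul₀ ht.ne']; exact smul_mem_smul_set hu)

theorem zero_coneLT_smul (hP : IsCone P) {t : ℝ} (ht : 0 < t) {u : E} (hu : u ∈ interior P) :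
    coneLT P 0 (t • u) := by
  rw [coneLT, sub_zero]
  exact hP.smul_mem_interior ht hu

theorem coneLT_of_coneLE_of_coneLT (hP : IsCone P) {a b c : E} (hab : coneLE P a b)
    (hbc : coneLT P b c) : coneLT P a c := by
  rw [coneLT, ← sub_add_sub_cancel c b a]
  exact hP.add_mem_interior hbc hab

theorem coneLT_of_coneLT_of_coneLE (hP : IsCone P) {a b c : E} (hab : coneLT P a b)
    (hbc : coneLE P b c) : coneLT P a c := by
  rw [coneLT, ← sub_add_sub_cancel' b a c]
  exact hP.add_mem_interior hab hbc

theorem smul_coneLE_smul_iff (hP : IsCone P) {t : ℝ} (ht : 0 < t) {a b : E} :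
    coneLE P (t • a) (t • b) ↔ coneLE P a b := by
  refine ⟨fun h => ?_, fun h => ?_⟩
  · simpa [coneLE, ← smul_sub, inv_smul_smul₀ ht.ne'] using hP.smul_mem (inv_nonneg.2 ht.le) h
  · simpa [coneLE, ← smul_sub] using hP.smul_mem ht.le h

end IsCone

theorem eventually_smul_coneLE {w : E} (hw : w ∈ interior P) (v : E) :
    ∀ᶠ t : ℝ in 𝓝 0, coneLE P (t • v) w := by
  have : Continuous fun t : ℝ => w - t • v := by fun_prop
  exact ((this.tendsto' 0 w (by simp)).eventually (isOpen_interior.mem_nhds hw)).mono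
    fun _ ht => interior_subset ht

theorem exists_mem_Ioo_smul_coneLE {w : E} (hw : w ∈ interior P) (v : E) {r : ℝ} (hr : 0 < r) :
    ∃ t ∈ Ioo 0 r, coneLE P (t • v) w :=
  (((eventually_smul_coneLE hw v).filter_mono nhdsWithin_le_nhds).and
    (Ioo_mem_nhdsGT hr)).exists.imp fun _ h => ⟨h.2, h.1⟩

end Cone

section ConeNorm

variable {E : Type*} [NormedAddCommGroup E] [NormedSpace ℝ E] {P : Set E}
  {X : Type*} [AddCommGroup X] [Module ℝ X] {nX : X → E} {e : E}

namespace IsConeNorm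

theorem map_smul (hnX : IsConeNorm P nX) (a : ℝ) (x : X) : nX (a • x) = |a| • nX x :=
  hnX.2.2.1 a x

theorem map_add_le (hnX : IsConeNorm P nX) (x y : X) : coneLE P (nX (x + y)) (nX x + nX y) :=
  hnX.2.2.2 x y

theorem map_sub_le (hnX : IsConeNorm P nX) (a b c : X) :
    coneLE P (nX (a - c)) (nX (a - b) + nX (b - c)) := by
  simpa using hnX.map_add_le (a - b) (b - c)

end IsConeNorm

theorem exists_coneBall_smul_subset (hP : IsCone P) (hnX : IsConeNorm P nX) {x y : X} {c : E}
    (hx : x ∈ coneBall P nX y c) :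
    ∃ r > (0 : ℝ), coneBall P nX x (r • e) ⊆ coneBall P nX y c := by
  obtain ⟨r, ⟨hr, -⟩, hrc⟩ := exists_mem_Ioo_smul_coneLE hx e one_pos
  refine ⟨r, hr, fun z hz => hP.coneLT_of_coneLE_of_coneLT (hnX.map_sub_le y x z)
    (hP.coneLT_of_coneLT_of_coneLE (b := nX (y - x) + r • e) ?_ ?_)⟩
  · show nX (y - x) + r • e - (nX (y - x) + nX (x - z)) ∈ interior P
    rwa [add_sub_add_left_eq_sub]
  · show c - (nX (y - x) + r • e) ∈ P
    rwa [← sub_sub]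

def coneUnitBall (P : Set E) (nX : X → E) (e : E) : Set X := {x | coneLE P (nX x) e}

theorem mem_smul_coneUnitBall_iff (hP : IsCone P) (hnX : IsConeNorm P nX) {b : ℝ} (hb : 0 < b)
    {x : X} : x ∈ b • coneUnitBall P nX e ↔ coneLE P (nX x) (b • e) := by
  rw [mem_smul_set_iff_inv_smul_mem₀ hb.ne', coneUnitBall, mem_ofPred_eq, hnX.map_smul,
    abs_of_pos (inv_pos.2 hb), ← hP.smul_coneLE_smul_iff hb, smul_inv_smul₀ hb.ne']

theorem balanced_coneUnitBall (hP : IsCone P) (hnX : IsConeNorm P nX) (he : e ∈ P) :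
    Balanced ℝ (coneUnitBall P nX e) := by
  rintro a ha _ ⟨x, hx, rfl⟩
  rw [Real.norm_eq_abs] at ha
  have key : e - nX (a • x) = (1 - |a|) • e + |a| • (e - nX x) := by
    rw [hnX.map_smul]
    module
  show e - nX (a • x) ∈ P
  rw [key]
  exact hP.smul_add_smul_mem he hx (by linarith) (abs_nonneg a)

theorem convex_coneUnitBall (hP : IsCone P) (hnX : IsConeNorm P nX) :
    Convex ℝ (coneUnitBall P nX e) := by
  intro x hx y hy a b ha hb hab
  obtain rfl : b = 1 - a := by linarith
  have htri := hnX.map_add_le (a • x) ((1 - a) • y)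
  rw [hnX.map_smul, hnX.map_smul, abs_of_nonneg ha, abs_of_nonneg hb] at htri
  have key : e - nX (a • x + (1 - a) • y) =
      (a • nX x + (1 - a) • nX y - nX (a • x + (1 - a) • y)) +
        (a • (e - nX x) + (1 - a) • (e - nX y)) := by
    module
  show e - nX (a • x + (1 - a) • y) ∈ P
  rw [key]
  exact hP.add_mem htri (hP.smul_add_smul_mem hx hy ha hb)

theorem absorbent_coneUnitBall (hnX : IsConeNorm P nX) (he : e ∈ interior P) :
    Absorbent ℝ (coneUnitBall P nX e) := by
  rw [absorbent_iff_eventually_nhdsNE_zero]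
  intro x
  have h := (continuous_abs.tendsto' 0 0 abs_zero).eventually (eventually_smul_coneLE he (nX x))
  filter_upwards [h.filter_mono nhdsWithin_le_nhds] with c hc
  show coneLE P (nX (c • x)) e
  rwa [hnX.map_smul]

noncomputable def coneGauge (hP : IsCone P) (hnX : IsConeNorm P nX) (he : e ∈ interior P) :
    Seminorm ℝ X :=
  gaugeSeminorm (balanced_coneUnitBall hP hnX (interior_subset he)) (convex_coneUnitBall hP hnX)
    (absorbent_coneUnitBall hnX he)

theorem coneGauge_lt_iff (hP : IsCone P) (hnX : IsConeNorm P nX) (he : e ∈ interior P) {r : ℝ}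
    (hr : 0 < r) (x : X) : coneGauge hP hnX he x < r ↔ coneLT P (nX x) (r • e) := by
  show gauge (coneUnitBall P nX e) x < r ↔ _
  constructor
  · intro h
    obtain ⟨b, hb, hbr, hx⟩ := exists_lt_of_gauge_lt (absorbent_coneUnitBall hnX he) h
    rw [mem_smul_coneUnitBall_iff hP hnX hb] at hx
    refine hP.coneLT_of_coneLE_of_coneLT hx ?_
    show r • e - b • e ∈ interior P
    rw [← sub_smul]
    exact hP.smul_mem_interior (sub_pos.2 hbr) he
  · intro h
    obtain ⟨t, ⟨ht, htr⟩, hte⟩ := exists_mem_Ioo_smul_coneLE h e hr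
    have hx : x ∈ (r - t) • coneUnitBall P nX e := by
      rw [mem_smul_coneUnitBall_iff hP hnX (sub_pos.2 htr)]
      have key : (r - t) • e - nX x = r • e - nX x - t • e := by
        rw [sub_smul]
        abel
      show (r - t) • e - nX x ∈ P
      rw [key]
      exact hte
    exact (gauge_le_of_mem (sub_pos.2 htr).le hx).trans_lt (sub_lt_self r ht)

noncomputable abbrev coneGaugeMetric (hP : IsCone P) (hnX : IsConeNorm P nX)
    (he : e ∈ interior P) : PseudoMetricSpace X :=
  (coneGauge hP hnX he).toAddGroupSeminorm.toSeminormedAddCommGroup.toPseudoMetricSpace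

theorem coneGaugeMetric_dist_lt_iff (hP : IsCone P) (hnX : IsConeNorm P nX) (he : e ∈ interior P)
    {r : ℝ} (hr : 0 < r) (x y : X) :
    (coneGaugeMetric hP hnX he).dist x y < r ↔ coneLT P (nX (y - x)) (r • e) := by
  rw [← neg_add_eq_sub]
  exact coneGauge_lt_iff hP hnX he hr (-x + y)

theorem coneGaugeMetric_ball (hP : IsCone P) (hnX : IsConeNorm P nX) (he : e ∈ interior P)
    {r : ℝ} (hr : 0 < r) (x : X) :
    @Metric.ball X (coneGaugeMetric hP hnX he) x r = coneBall P nX x (r • e) := by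
  ext y
  exact coneGaugeMetric_dist_lt_iff hP hnX he hr y x

theorem coneTopology_eq (hP : IsCone P) (hnX : IsConeNorm P nX) (he : e ∈ interior P) :
    coneTopology P nX = (coneGaugeMetric hP hnX he).toUniformSpace.toTopologicalSpace := by
  let _ := coneGaugeMetric hP hnX he
  apply le_antisymm
  · rw [TopologicalSpace.le_def]
    intro U hU
    rw [@isOpen_iff_forall_mem_open X (coneTopology P nX)]
    intro x hx
    obtain ⟨r, hr, hrU⟩ := Metric.isOpen_iff.1 hU x hx
    refine ⟨_, hrU, ?_, Metric.mem_ball_self hr⟩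
    rw [coneGaugeMetric_ball hP hnX he hr]
    exact TopologicalSpace.GenerateOpen.basic _ ⟨x, _, hP.zero_coneLT_smul hr he, rfl⟩
  · refine le_generateFrom ?_
    rintro _ ⟨y, c, -, rfl⟩
    rw [Metric.isOpen_iff]
    intro x hx
    obtain ⟨r, hr, hsub⟩ := exists_coneBall_smul_subset (e := e) hP hnX hx
    exact ⟨r, hr, by rwa [coneGaugeMetric_ball hP hnX he hr]⟩

theorem completeSpace_coneGaugeMetric (hP : IsCone P) (hnX : IsConeNorm P nX)
    (he : e ∈ interior P) (hcomplete : ConeComplete P nX) :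
    @CompleteSpace X (coneGaugeMetric hP hnX he).toUniformSpace := by
  let _ := coneGaugeMetric hP hnX he
  refine Metric.complete_of_cauchySeq_tendsto fun u hu => ?_
  have hcauchy : ConeCauchy P nX u := by
    intro c hc
    obtain ⟨r, ⟨hr, -⟩, hrc⟩ := exists_mem_Ioo_smul_coneLE hc e one_pos
    obtain ⟨N, hN⟩ := Metric.cauchySeq_iff.1 hu r hr
    refine ⟨N, fun k hk m hm => hP.coneLT_of_coneLT_of_coneLE ?_ (by simpa using hrc)⟩
    exact (coneGaugeMetric_dist_lt_iff hP hnX he hr _ _).1 (hN m hm k hk)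
  obtain ⟨x₀, hx₀⟩ := hcomplete u hcauchy
  refine ⟨x₀, Metric.tendsto_atTop.2 fun ε hε => ?_⟩
  obtain ⟨N, hN⟩ := hx₀ _ (hP.zero_coneLT_smul hε he)
  refine ⟨N, fun n hn => ?_⟩
  rw [dist_comm, coneGaugeMetric_dist_lt_iff hP hnX he hε]
  exact hN n hn

theorem baireSpace_coneTopology (hP : IsCone P) (hint : (interior P).Nonempty)
    (hnX : IsConeNorm P nX) (hcomplete : ConeComplete P nX) :
    @BaireSpace X (coneTopology P nX) := by
  obtain ⟨e, he⟩ := hint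
  let _ := coneGaugeMetric hP hnX he
  have := completeSpace_coneGaugeMetric hP hnX he hcomplete
  rw [coneTopology_eq hP hnX he]
  infer_instance

end ConeNorm

theorem cone_baire_category_general
    {E : Type*} [NormedAddCommGroup E] [NormedSpace ℝ E]
    {X : Type*} [AddCommGroup X] [Module ℝ X]
    (P : Set E) (hP : IsCone P) (hint : (interior P).Nonempty)
    (nX : X → E) (hnX : IsConeNorm P nX) (hcomplete : ConeComplete P nX)
    (A : ℕ → Set X)
    (hopen : ∀ k, @IsOpen X (coneTopology P nX) (A k))
    (hdense : ∀ k, @Dense X (coneTopology P nX) (A k)) :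
    @Dense X (coneTopology P nX) (⋂ k, A k) := by
  let _ := coneTopology P nX
  have := baireSpace_coneTopology hP hint hnX hcomplete
  exact dense_iInter_of_isOpen hopen hdense

/-- Baire category theorem for cone Banach spaces:
in a cone Banach space, a countable intersection of dense open sets
(with respect to the cone topology) is dense. -/
theorem cone_baire_category
    {E : Type*} [NormedAddCommGroup E] [NormedSpace ℝ E] [CompleteSpace E]
    {X : Type*} [AddCommGroup X] [Module ℝ X]
    (P : Set E) (hP : IsCone P) (hint : (interior P).Nonempty)
    (M : ℝ) (hM : IsNormalConst P M)
    (nX : X → E) (hnX : IsConeNorm P nX) (hcomplete : ConeComplete P nX)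
    (A : ℕ → Set X)
    (hopen : ∀ k, @IsOpen X (coneTopology P nX) (A k))
    (hdense : ∀ k, @Dense X (coneTopology P nX) (A k)) :
    @Dense X (coneTopology P nX) (⋂ k, A k) :=
  cone_baire_category_general P hP hint nX hnX hcomplete A hopen hdense
end
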